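/- There exists an absolute constant C > 0 such that for every α > 0, all integers 0 < m < N, every choice of multipliers q̂_0, …, q̂_N satisfying q̂_k = 0 for k ≤ m and 1 − m/k ≤ q̂_k < 1 for k > m, and every φ ∈ R_N, one has ‖D_x φ‖² ≤ C (‖D_x Q_m φ‖² + α² m² ‖φ‖²). -/

import Mathlib

/-!
`D_x` is the lowering operator of the Hermite basis, `D_x H_{k+1}^α = α √(2(k+1)) H_k^α` and
`D_x H_0^α = 0`, and the `H_k^α` are orthonormal. For `φ = Σ φ̂_k H_k^α` this gives
`‖D_x φ‖² = 2α² Σ k φ̂_k²`, `‖D_x Q_m φ‖² = 2α² Σ k q̂_k² φ̂_k²` and `‖φ‖² = Σ φ̂_k²`, so with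
`C = 4` the inequality holds coefficientwise once `k ≤ 4 q̂_k² k + 2 m²`. For `k ≤ 2m` this is
`k ≤ 2m ≤ 2m²`; for `k > 2m` the viscosity bound gives `q̂_k ≥ 1 - m/k ≥ 1/2`, i.e. `4 q̂_k² ≥ 1`.

Orthonormality is proved by integration by parts, from `(ℋ_k e^{-x²})' = -ℋ_{k+1} e^{-x²}` and
`ℋ_{k+1}' = 2(k+1) ℋ_k`.
-/

open MeasureTheory Real

/-- Physicists' Hermite polynomial: `ℋ_n(x) = (−1)^n e^{x²} (dⁿ/dxⁿ) e^{−x²}`. -/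
noncomputable def physHermite (n : ℕ) : ℝ → ℝ :=
  fun x => (-1 : ℝ) ^ n * Real.exp (x ^ 2) * iteratedDeriv n (fun y => Real.exp (-(y ^ 2))) x

/-- Generalized Hermite function `H_n^α(x) = (α/(2^n n! √π))^{1/2} ℋ_n(αx) e^{−α²x²/2}`. -/
noncomputable def genHermite (α : ℝ) (n : ℕ) : ℝ → ℝ :=
  fun x => Real.sqrt (α / (2 ^ n * n.factorial * Real.sqrt Real.pi)) *
    physHermite n (α * x) * Real.exp (-(α ^ 2 * x ^ 2) / 2)

/-- Integer-indexed generalized Hermite function, with the convention `H_n^α ≡ 0` for `n < 0`. -/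
noncomputable def genHermiteZ (α : ℝ) (n : ℤ) : ℝ → ℝ :=
  fun x => if 0 ≤ n then genHermite α n.toNat x else 0

/-- The operator `D_x = ∂_x + α² x`. -/
noncomputable def Dx (α : ℝ) (u : ℝ → ℝ) : ℝ → ℝ :=
  fun x => deriv u x + α ^ 2 * x * u x

/-- The Sturm–Liouville operator
`L_α(u)(x) = −e^{α²x²/2} ∂_x(e^{−α²x²} ∂_x(e^{α²x²/2} u(x)))`. -/
noncomputable def SLop (α : ℝ) (u : ℝ → ℝ) : ℝ → ℝ :=
  fun x => -(Real.exp (α ^ 2 * x ^ 2 / 2) *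
    deriv (fun y => Real.exp (-(α ^ 2 * y ^ 2)) *
      deriv (fun z => Real.exp (α ^ 2 * z ^ 2 / 2) * u z) y) x)

open Polynomial

noncomputable def physHermitePoly : ℕ → ℝ[X]
  | 0 => 1
  | n + 1 => C 2 * X * physHermitePoly n - derivative (physHermitePoly n)

namespace physHermitePoly

@[simp]
lemma zero : physHermitePoly 0 = 1 := rfl

lemma eval_succ (n : ℕ) (x : ℝ) :
    (physHermitePoly (n + 1)).eval x
      = 2 * x * (physHermitePoly n).eval x - (derivative (physHermitePoly n)).eval x := by
  simp [physHermitePoly]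

lemma derivative_succ :
    ∀ n : ℕ, derivative (physHermitePoly (n + 1)) = C (2 * (n + 1) : ℝ) * physHermitePoly n
  | 0 => by simp [physHermitePoly]
  | n + 1 => by
      rw [physHermitePoly, derivative_sub, derivative_mul, derivative_mul, derivative_succ n,
        derivative_C, derivative_X, derivative_mul, derivative_C, physHermitePoly]
      push_cast
      rw [show (2 : ℝ) * (n + 1 + 1) = 2 * (n + 1) + 2 by ring, map_add]
      ring

end physHermitePoly

lemma hasDerivAt_physHermitePoly_mul_gaussian (k : ℕ) (x : ℝ) :
    HasDerivAt (fun y => (physHermitePoly k).eval y * exp (-y ^ 2))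
      (-((physHermitePoly (k + 1)).eval x * exp (-x ^ 2))) x := by
  have hg : HasDerivAt (fun y : ℝ => exp (-y ^ 2)) (-(2 * x) * exp (-x ^ 2)) x := by
    simpa [mul_comm] using ((hasDerivAt_pow 2 x).neg).exp
  refine (((physHermitePoly k).hasDerivAt x).mul hg).congr_deriv ?_
  rw [physHermitePoly.eval_succ]
  ring

lemma iteratedDeriv_gaussian (n : ℕ) :
    iteratedDeriv n (fun y : ℝ => exp (-y ^ 2))
      = fun x => (-1) ^ n * ((physHermitePoly n).eval x * exp (-x ^ 2)) := by
  induction n with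
  | zero => simp
  | succ n ih =>
    funext x
    rw [iteratedDeriv_succ, ih,
      ((hasDerivAt_physHermitePoly_mul_gaussian n x).const_mul ((-1 : ℝ) ^ n)).deriv]
    ring

lemma physHermite_eq_eval (n : ℕ) : physHermite n = fun x => (physHermitePoly n).eval x := by
  funext x
  rw [physHermite, iteratedDeriv_gaussian]
  calc (-1) ^ n * exp (x ^ 2) * ((-1) ^ n * ((physHermitePoly n).eval x * exp (-x ^ 2)))
      = ((-1) ^ n * (-1) ^ n) * (exp (x ^ 2) * exp (-x ^ 2)) * (physHermitePoly n).eval x := by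
        ring
    _ = (physHermitePoly n).eval x := by
        rw [← pow_add, ← two_mul, pow_mul, ← exp_add]; simp

lemma integrable_eval_mul_exp_neg_mul_sq (p : ℝ[X]) {b : ℝ} (hb : 0 < b) :
    Integrable fun x => p.eval x * exp (-b * x ^ 2) := by
  induction p using Polynomial.induction_on' with
  | add p q hp hq => simpa [add_mul, Pi.add_def] using hp.add hq
  | monomial n a =>
    have h := integrable_rpow_mul_exp_neg_mul_sq hb (s := n) (by linarith [n.cast_nonneg (α := ℝ)])
    simpa [mul_assoc] using h.const_mul a

lemma integrable_eval_mul_gaussian (p : ℝ[X]) : Integrable fun x => p.eval x * exp (-x ^ 2) := by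
  simpa using integrable_eval_mul_exp_neg_mul_sq p one_pos

lemma integral_eval_mul_physHermitePoly_succ_mul_gaussian (p : ℝ[X]) (k : ℕ) :
    ∫ x, p.eval x * ((physHermitePoly (k + 1)).eval x * exp (-x ^ 2))
      = ∫ x, (derivative p).eval x * ((physHermitePoly k).eval x * exp (-x ^ 2)) := by
  have hibp := integral_mul_deriv_eq_deriv_mul_of_integrable
    (u := fun x => p.eval x) (u' := fun x => (derivative p).eval x)
    (v := fun x => (physHermitePoly k).eval x * exp (-x ^ 2))
    (v' := fun x => -((physHermitePoly (k + 1)).eval x * exp (-x ^ 2)))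
    (fun x _ => p.hasDerivAt x) (fun x _ => hasDerivAt_physHermitePoly_mul_gaussian k x)
    (by simpa [Pi.mul_def, mul_assoc] using
      (integrable_eval_mul_gaussian (p * physHermitePoly (k + 1))).neg)
    (by simpa [Pi.mul_def, mul_assoc] using
      integrable_eval_mul_gaussian (derivative p * physHermitePoly k))
    (by simpa [Pi.mul_def, mul_assoc] using
      integrable_eval_mul_gaussian (p * physHermitePoly k))
  simpa [integral_neg] using hibp

lemma integral_physHermitePoly_mul_gaussian (j k : ℕ) :
    ∫ x, (physHermitePoly j).eval x * ((physHermitePoly k).eval x * exp (-x ^ 2))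
      = if j = k then 2 ^ j * j.factorial * √π else 0 := by
  induction k generalizing j with
  | zero =>
    cases j with
    | zero => simpa using integral_gaussian 1
    | succ j =>
      simp_rw [← mul_assoc, mul_comm ((physHermitePoly (j + 1)).eval _), mul_assoc]
      rw [integral_eval_mul_physHermitePoly_succ_mul_gaussian]
      simp
  | succ k ih =>
    rw [integral_eval_mul_physHermitePoly_succ_mul_gaussian]
    cases j with
    | zero => simp
    | succ j =>
      simp only [physHermitePoly.derivative_succ, eval_mul, eval_C, mul_assoc,
        integral_const_mul, ih, Nat.add_right_cancel_iff]
      split_ifs with h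
      · subst h; push_cast [Nat.factorial_succ, pow_succ]; ring
      · simp

noncomputable def genHermiteConst (α : ℝ) (n : ℕ) : ℝ :=
  √(α / (2 ^ n * n.factorial * √π))

lemma genHermite_eq (α : ℝ) (n : ℕ) : genHermite α n = fun x =>
    genHermiteConst α n * (physHermitePoly n).eval (α * x) * exp (-(α ^ 2 * x ^ 2) / 2) := by
  funext x
  rw [genHermite, physHermite_eq_eval, genHermiteConst]

lemma genHermiteConst_succ {α : ℝ} (hα : 0 ≤ α) (n : ℕ) :
    genHermiteConst α (n + 1) * (2 * (n + 1)) = √(2 * (n + 1)) * genHermiteConst α n := by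
  have hdiv : α / (2 ^ (n + 1) * (n + 1).factorial * √π)
      = α / (2 ^ n * n.factorial * √π) / (2 * (n + 1)) := by
    rw [div_div]
    push_cast [Nat.factorial_succ, pow_succ]
    ring
  rw [genHermiteConst, genHermiteConst, hdiv, sqrt_div (by positivity), div_mul_eq_mul_div,
    mul_div_assoc, div_sqrt, mul_comm]

lemma genHermite_mul_genHermite (α : ℝ) (j k : ℕ) (x : ℝ) :
    genHermite α j x * genHermite α k x = genHermiteConst α j * genHermiteConst α k *
      ((physHermitePoly j).eval (α * x) *
        ((physHermitePoly k).eval (α * x) * exp (-(α * x) ^ 2))) := by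
  have hexp : exp (-(α ^ 2 * x ^ 2) / 2) * exp (-(α ^ 2 * x ^ 2) / 2) = exp (-(α * x) ^ 2) := by
    rw [← exp_add]; ring_nf
  simp only [genHermite_eq]
  linear_combination genHermiteConst α j * (physHermitePoly j).eval (α * x) *
    (genHermiteConst α k * (physHermitePoly k).eval (α * x)) * hexp

lemma integrable_genHermite_mul_genHermite {α : ℝ} (hα : α ≠ 0) (j k : ℕ) :
    Integrable fun x => genHermite α j x * genHermite α k x := by
  simp_rw [genHermite_mul_genHermite]
  refine Integrable.const_mul ?_ _
  simpa [mul_assoc] using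
    (integrable_eval_mul_gaussian (physHermitePoly j * physHermitePoly k)).comp_mul_left' hα

lemma integral_genHermite_mul_genHermite {α : ℝ} (hα : 0 < α) (j k : ℕ) :
    ∫ x, genHermite α j x * genHermite α k x = if j = k then 1 else 0 := by
  simp_rw [genHermite_mul_genHermite]
  rw [integral_const_mul, Measure.integral_comp_mul_left
    (fun y => (physHermitePoly j).eval y * ((physHermitePoly k).eval y * exp (-y ^ 2))),
    integral_physHermitePoly_mul_gaussian, abs_of_pos (inv_pos.2 hα), smul_eq_mul]
  split_ifs with h
  · subst h
    rw [← sq, genHermiteConst, sq_sqrt (by positivity)]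
    field_simp
  · simp

lemma integral_sum_genHermite_sq {α : ℝ} (hα : 0 < α) (s : Finset ℕ) (e : ℕ → ℝ) :
    ∫ x, (∑ k ∈ s, e k * genHermite α k x) ^ 2 = ∑ k ∈ s, e k ^ 2 := by
  have hint : ∀ j k, Integrable fun x => e j * e k * (genHermite α j x * genHermite α k x) :=
    fun j k => (integrable_genHermite_mul_genHermite hα.ne' j k).const_mul _
  simp_rw [sq, Finset.sum_mul_sum, mul_mul_mul_comm]
  rw [integral_finsetSum _ fun j _ => integrable_finsetSum _ fun k _ => hint j k]
  refine Finset.sum_congr rfl fun j hj => ?_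
  simp_rw [integral_finsetSum _ fun k _ => hint j k, integral_const_mul,
    integral_genHermite_mul_genHermite hα, mul_ite, mul_one, mul_zero]
  rw [Finset.sum_ite_eq s j, if_pos hj]

lemma hasDerivAt_genHermite (α : ℝ) (n : ℕ) (x : ℝ) :
    HasDerivAt (genHermite α n)
      (genHermiteConst α n * α * (derivative (physHermitePoly n)).eval (α * x)
        * exp (-(α ^ 2 * x ^ 2) / 2) - α ^ 2 * x * genHermite α n x) x := by
  have hpoly : HasDerivAt (fun y => (physHermitePoly n).eval (α * y))
      ((derivative (physHermitePoly n)).eval (α * x) * α) x :=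
    ((physHermitePoly n).hasDerivAt (α * x)).comp x
      (((hasDerivAt_id x).const_mul α).congr_deriv (mul_one α))
  have hexp : HasDerivAt (fun y => exp (-(α ^ 2 * y ^ 2) / 2))
      (exp (-(α ^ 2 * x ^ 2) / 2) * (-(α ^ 2 * (2 * x)) / 2)) x := by
    simpa using ((((hasDerivAt_pow 2 x).const_mul (α ^ 2)).neg).div_const 2).exp
  rw [genHermite_eq]
  refine ((hpoly.const_mul (genHermiteConst α n)).mul hexp).congr_deriv ?_
  ring

lemma differentiable_genHermite (α : ℝ) (n : ℕ) : Differentiable ℝ (genHermite α n) :=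
  fun x => (hasDerivAt_genHermite α n x).differentiableAt

lemma Dx_finset_sum {ι : Type*} (α : ℝ) (s : Finset ι) (c : ι → ℝ) (f : ι → ℝ → ℝ)
    (hf : ∀ i ∈ s, Differentiable ℝ (f i)) :
    Dx α (fun x => ∑ i ∈ s, c i * f i x) = fun x => ∑ i ∈ s, c i * Dx α (f i) x := by
  funext x
  rw [Dx, (HasDerivAt.fun_sum fun i hi => ((hf i hi x).hasDerivAt.const_mul (c i))).deriv]
  simp only [Dx, Finset.mul_sum, ← Finset.sum_add_distrib]
  exact Finset.sum_congr rfl fun i _ => by ring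

lemma Dx_genHermite (α : ℝ) (n : ℕ) (x : ℝ) :
    Dx α (genHermite α n) x = genHermiteConst α n * α
      * (derivative (physHermitePoly n)).eval (α * x) * exp (-(α ^ 2 * x ^ 2) / 2) := by
  rw [Dx, (hasDerivAt_genHermite α n x).deriv]
  ring

lemma Dx_genHermite_zero (α : ℝ) : Dx α (genHermite α 0) = 0 := by
  funext x
  simp [Dx_genHermite]

lemma Dx_genHermite_succ {α : ℝ} (hα : 0 ≤ α) (n : ℕ) :
    Dx α (genHermite α (n + 1)) = fun x => α * √(2 * (n + 1)) * genHermite α n x := by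
  funext x
  rw [Dx_genHermite, physHermitePoly.derivative_succ, genHermite_eq]
  simp only [eval_mul, eval_C]
  linear_combination α * (physHermitePoly n).eval (α * x) * exp (-(α ^ 2 * x ^ 2) / 2) *
    genHermiteConst_succ hα n

lemma integral_Dx_sum_genHermite_sq {α : ℝ} (hα : 0 < α) (N : ℕ) (c : ℕ → ℝ) :
    ∫ x, Dx α (fun x => ∑ k ∈ Finset.range (N + 1), c k * genHermite α k x) x ^ 2
      = 2 * α ^ 2 * ∑ k ∈ Finset.range (N + 1), k * c k ^ 2 := by
  have hlower : Dx α (fun x => ∑ k ∈ Finset.range (N + 1), c k * genHermite α k x)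
      = fun x => ∑ k ∈ Finset.range N,
          (α * √(2 * (k + 1)) * c (k + 1)) * genHermite α k x := by
    rw [Dx_finset_sum _ _ _ _ fun k _ => differentiable_genHermite α k]
    funext x
    simp only [Finset.sum_range_succ', Dx_genHermite_zero, Dx_genHermite_succ hα.le,
      Pi.zero_apply, mul_zero, add_zero]
    exact Finset.sum_congr rfl fun k _ => by ring
  rw [hlower, integral_sum_genHermite_sq hα, Finset.sum_range_succ', Nat.cast_zero, zero_mul,
    add_zero, Finset.mul_sum]
  refine Finset.sum_congr rfl fun k _ => ?_
  rw [mul_pow, mul_pow, sq_sqrt (by positivity)]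
  push_cast
  ring

lemma le_four_mul_sq_mul_add_two_mul_sq {m k : ℕ} {q : ℝ} (hm : 0 < m)
    (hq : m < k → 1 - (m : ℝ) / k ≤ q) : (k : ℝ) ≤ 4 * (q ^ 2 * k) + 2 * m ^ 2 := by
  have hm1 : (1 : ℝ) ≤ m := by exact_mod_cast hm
  rcases le_or_gt k (2 * m) with hk | hk
  · have hk' : (k : ℝ) ≤ 2 * m := by exact_mod_cast hk
    nlinarith [sq_nonneg q, k.cast_nonneg (α := ℝ)]
  · have hk' : (2 * m : ℝ) < k := by exact_mod_cast hk
    have hhalf : (m : ℝ) / k ≤ 1 / 2 := by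
      rw [div_le_div_iff₀ (by linarith) two_pos]; linarith
    have hq' : 1 / 2 ≤ q := by linarith [hq (by omega)]
    have h4 : 1 ≤ 4 * q ^ 2 := by nlinarith
    nlinarith [mul_le_mul_of_nonneg_right h4 k.cast_nonneg]

/-- with the viscosity operator `Q_m` acting on
`φ = Σ_{k=0}^N c_k H_k^α ∈ R_N` by `Q_m φ = Σ_{k=0}^N q̂_k c_k H_k^α`, one has
`‖D_x φ‖² ≤ C (‖D_x Q_m φ‖² + α² m² ‖φ‖²)` for an absolute constant `C > 0`. -/
theorem Dx_le_DxQ : ∃ C : ℝ, 0 < C ∧ ∀ (α : ℝ), 0 < α → ∀ (m N : ℕ), 0 < m → m < N →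
    ∀ q : ℕ → ℝ, (∀ k ≤ N, k ≤ m → q k = 0) →
    (∀ k ≤ N, m < k → 1 - (m : ℝ) / (k : ℝ) ≤ q k ∧ q k < 1) →
    ∀ (c : ℕ → ℝ) (φ Qφ : ℝ → ℝ),
    (φ = fun x => ∑ k ∈ Finset.range (N + 1), c k * genHermite α k x) →
    (Qφ = fun x => ∑ k ∈ Finset.range (N + 1), q k * c k * genHermite α k x) →
    ∫ x : ℝ, (Dx α φ x) ^ 2
      ≤ C * ((∫ x : ℝ, (Dx α Qφ x) ^ 2) + α ^ 2 * (m : ℝ) ^ 2 * ∫ x : ℝ, (φ x) ^ 2) := by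
  refine ⟨4, four_pos, ?_⟩
  rintro α hα m N hm - q - hq c φ Qφ rfl rfl
  beta_reduce
  rw [integral_Dx_sum_genHermite_sq hα, integral_sum_genHermite_sq hα,
    integral_Dx_sum_genHermite_sq hα _ fun k => q k * c k]
  have hterm : ∀ k ∈ Finset.range (N + 1), 2 * α ^ 2 * (k * c k ^ 2)
      ≤ 4 * (2 * α ^ 2 * (k * (q k * c k) ^ 2)) + 4 * (α ^ 2 * m ^ 2 * c k ^ 2) := by
    intro k hk
    have hweight := le_four_mul_sq_mul_add_two_mul_sq (q := q k) hm
      fun hmk => (hq k (Finset.mem_range_succ_iff.1 hk) hmk).1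
    have hscale : 0 ≤ 2 * α ^ 2 * c k ^ 2 := by positivity
    nlinarith [mul_le_mul_of_nonneg_left hweight hscale]
  calc 2 * α ^ 2 * ∑ k ∈ Finset.range (N + 1), k * c k ^ 2
      ≤ ∑ k ∈ Finset.range (N + 1),
          (4 * (2 * α ^ 2 * (k * (q k * c k) ^ 2)) + 4 * (α ^ 2 * m ^ 2 * c k ^ 2)) := by
        rw [Finset.mul_sum]; exact Finset.sum_le_sum hterm
    _ = _ := by simp only [Finset.sum_add_distrib, ← Finset.mul_sum]; ring
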